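/- arXiv:2005.13715 — 3 statements merged into one kernel-verified Lean document; each statement's English description precedes it below -/
import Mathlib

section
/- Let D = S + R·M_w with integers 0 ≤ S < M_w and R ≥ 0. If S > 0, then A*_{d_w}(D) ≤ q^R · (1 + |w⁻¹([S]_w)|). If S = 0, then A*_{d_w}(D) ≤ q^R. In either case A*_{d_w}(D) < q^{R+1}. -/
set_option linter.unusedSectionVars false

open scoped Classical

noncomputable section

variable {F : Type*} [Field F] [Fintype F]

def IsWeight (w : F → ℕ) : Prop :=
  (∀ a : F, w a = 0 ↔ a = 0) ∧ (∀ a : F, w (-a) = w a) ∧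
    (∀ a b : F, w (a + b) ≤ w a + w b)

def Mw (w : F → ℕ) : ℕ := Finset.univ.sup w

def mw (w : F → ℕ) : ℕ := sInf {s | ∃ a : F, a ≠ 0 ∧ w a = s}

def rho {n : ℕ} (u : Fin n → F) : ℕ :=
  (Finset.univ.filter fun j => u j ≠ 0).sup fun j => (j : ℕ) + 1

lemma rho_le {n : ℕ} (u : Fin n → F) : rho u ≤ n :=
  Finset.sup_le fun j _ => j.isLt

def chainWeight {n : ℕ} (w : F → ℕ) (u : Fin n → F) : ℕ :=
  if h : rho u = 0 then 0
  else w (u ⟨rho u - 1,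
        lt_of_lt_of_le (Nat.sub_lt (Nat.pos_of_ne_zero h) Nat.one_pos) (rho_le u)⟩)
      + (rho u - 1) * Mw w

def dChain {n : ℕ} (w : F → ℕ) (u v : Fin n → F) : ℕ := chainWeight w (u - v)

def ballW {n : ℕ} (w : F → ℕ) (x : Fin n → F) (r : ℕ) : Finset (Fin n → F) :=
  Finset.univ.filter fun v => dChain w x v ≤ r

def diamW {n : ℕ} (w : F → ℕ) (A : Finset (Fin n → F)) : ℕ :=
  (A ×ˢ A).sup fun p => dChain w p.1 p.2

def AstarW (w : F → ℕ) (n D : ℕ) : ℕ :=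
  Finset.univ.sup fun A : Finset (Fin n → F) => if diamW w A ≤ D then A.card else 0

def winv (w : F → ℕ) (S : ℕ) : Finset F :=
  Finset.univ.filter fun a => a ≠ 0 ∧ w a ≤ S

def dP {n : ℕ} (C : Finset (Fin n → F)) : ℕ :=
  sInf {s | ∃ x ∈ C, ∃ y ∈ C, x ≠ y ∧ rho (x - y) = s}

def dW {n : ℕ} (w : F → ℕ) (C : Finset (Fin n → F)) : ℕ :=
  sInf {s | ∃ x ∈ C, ∃ y ∈ C, x ≠ y ∧ dChain w x y = s}

def floorW (w : F → ℕ) (n D : ℕ) : ℕ :=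
  (Finset.univ.filter fun u : Fin n → F => chainWeight w u < D).sup (chainWeight w)

def nonArch (w : F → ℕ) : Prop := ∀ a b : F, w (a + b) ≤ max (w a) (w b)

def Sw (w : F → ℕ) : ℕ :=
  if nonArch w then Mw w
  else sInf {s | ∃ a b : F, max (w a) (w b) < w (a - b) ∧ max (w a) (w b) = s}

def WwCond (w : F → ℕ) (S : ℕ) (K : Finset F) : Prop :=
  (∀ a ∈ K, Sw w ≤ w a ∧ w a ≤ S) ∧
  (∀ a ∈ K, ∀ b : F, w b ≤ Sw w - 1 → w (a - b) ≤ S) ∧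
  (∀ a ∈ K, ∀ b ∈ K, w (a - b) ≤ S)

def WwCard (w : F → ℕ) (S : ℕ) : ℕ :=
  Finset.univ.sup fun K : Finset F => if WwCond w S K then K.card else 0

def idealOf {n : ℕ} (P : PartialOrder (Fin n)) (u : Fin n → F) : Finset (Fin n) :=
  Finset.univ.filter fun j => ∃ i : Fin n, u i ≠ 0 ∧ P.le j i

def maxOf {n : ℕ} (P : PartialOrder (Fin n)) (u : Fin n → F) : Finset (Fin n) :=
  (idealOf P u).filter fun j => ∀ k ∈ idealOf P u, P.le j k → j = k

def posetWeight {n : ℕ} (P : PartialOrder (Fin n)) (w : F → ℕ) (u : Fin n → F) : ℕ :=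
  (∑ i ∈ maxOf P u, w (u i)) + Mw w * ((idealOf P u) \ (maxOf P u)).card

def dPoset {n : ℕ} (P : PartialOrder (Fin n)) (w : F → ℕ) (u v : Fin n → F) : ℕ :=
  posetWeight P w (u - v)

def ballP {n : ℕ} (P : PartialOrder (Fin n)) (w : F → ℕ) (x : Fin n → F) (r : ℕ) :
    Finset (Fin n → F) :=
  Finset.univ.filter fun v => dPoset P w x v ≤ r

def diamP {n : ℕ} (P : PartialOrder (Fin n)) (w : F → ℕ) (A : Finset (Fin n → F)) : ℕ :=
  (A ×ˢ A).sup fun p => dPoset P w p.1 p.2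

end

/-! A vector of chain weight at most `S + R·M_w` with `S < M_w` vanishes beyond coordinate `R`
(coordinates indexed from `0`) and has weight at most `S` at coordinate `R`. So in a set `A` of
diameter at most `S + R·M_w` any two points agree beyond `R` and differ at `R` by an element of
weight at most `S`. Fixing `y ∈ A`, the map `x ↦ ((x_j)_{j<R}, x_R - y_R)` is injective on `A`,
with values in `F^R × {a | w a ≤ S}`; this set has `q^R (1 + |w⁻¹([S]_w)|)` elements, fewer than
`q^(R+1)` because it misses every element of weight `M_w`. -/

lemma card_le_pow_mul_card {G : Type*} [AddGroup G] [Fintype G] {n : ℕ} (R : ℕ)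
    {A : Finset (Fin n → G)} {K : Finset G} (hK : 0 ∈ K)
    (hhigh : ∀ x ∈ A, ∀ y ∈ A, ∀ j : Fin n, R < j → x j = y j)
    (hR : ∀ x ∈ A, ∀ y ∈ A, ∀ j : Fin n, (j : ℕ) = R → x j - y j ∈ K) :
    A.card ≤ Fintype.card G ^ R * K.card := by
  obtain rfl | ⟨x₀, hx₀⟩ := A.eq_empty_or_nonempty
  · simp
  -- coordinates indexed by `ℕ`, so that coordinate `R` is defined (as `0`) even when `n ≤ R`
  let coord : (Fin n → G) → ℕ → G := fun x j => if h : j < n then x ⟨j, h⟩ else 0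
  have coord_fin : ∀ x (j : Fin n), coord x j = x j := fun x j => by simp [coord]
  let Φ : (Fin n → G) → (Fin R → G) × G := fun x => (fun i => coord x i, coord x R - coord x₀ R)
  have hmaps : Set.MapsTo Φ A ((Finset.univ : Finset (Fin R → G)) ×ˢ K : Finset _) :=
    fun x hx => by
      refine Finset.mem_product.2 ⟨Finset.mem_univ _, ?_⟩
      by_cases hRn : R < n
      · simpa [Φ, coord, hRn] using hR x hx x₀ hx₀ ⟨R, hRn⟩ rfl
      · simpa [Φ, coord, hRn] using hK
  have hinj : Set.InjOn Φ A := fun x hx y hy hxy => by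
    obtain ⟨hlow, hmid⟩ := Prod.mk.inj hxy
    funext j
    rcases lt_trichotomy (j : ℕ) R with hjR | hjR | hjR
    · simpa [coord_fin] using congrFun hlow ⟨j, hjR⟩
    · simpa [coord_fin, ← hjR] using sub_left_injective hmid
    · exact hhigh x hx y hy j hjR
  calc A.card ≤ ((Finset.univ : Finset (Fin R → G)) ×ˢ K).card :=
        Finset.card_le_card_of_injOn Φ hmaps hinj
    _ = Fintype.card G ^ R * K.card := by simp

section ChainWeight

variable {F : Type*} [Field F] [Fintype F] {n : ℕ} {w : F → ℕ}

lemma le_rho {u : Fin n → F} {j : Fin n} (hu : u j ≠ 0) : (j : ℕ) + 1 ≤ rho u :=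
  Finset.le_sup (f := fun j : Fin n => (j : ℕ) + 1) (by simp [hu])

lemma rho_le_of_forall_le_imp_eq_zero {u : Fin n → F} {m : ℕ}
    (h : ∀ k : Fin n, m ≤ k → u k = 0) : rho u ≤ m :=
  Finset.sup_le fun k hk => by
    by_contra hlt
    exact (Finset.mem_filter.1 hk).2 (h k (by omega))

lemma exists_succ_eq_rho {u : Fin n → F} {j : Fin n} (hu : u j ≠ 0) :
    ∃ i : Fin n, u i ≠ 0 ∧ (i : ℕ) + 1 = rho u := by
  obtain ⟨i, hi, hrho⟩ := Finset.exists_mem_eq_sup (Finset.univ.filter fun j => u j ≠ 0)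
    ⟨j, by simp [hu]⟩ fun j : Fin n => (j : ℕ) + 1
  exact ⟨i, (Finset.mem_filter.1 hi).2, hrho.symm⟩

lemma chainWeight_eq_of_succ_eq_rho (w : F → ℕ) {u : Fin n → F} {i : Fin n}
    (hi : (i : ℕ) + 1 = rho u) : chainWeight w u = w (u i) + i * Mw w := by
  have hrho : rho u ≠ 0 := by omega
  have hidx : rho u - 1 = i := by omega
  rw [chainWeight, dif_neg hrho]
  simp only [hidx, Fin.eta]

lemma mul_Mw_lt_chainWeight (hw : ∀ a : F, w a = 0 ↔ a = 0) {u : Fin n → F} {j : Fin n}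
    (hu : u j ≠ 0) : j * Mw w < chainWeight w u := by
  obtain ⟨i, hi, hrho⟩ := exists_succ_eq_rho hu
  have hji : (j : ℕ) ≤ i := by have := le_rho hu; omega
  have hpos : 0 < w (u i) := Nat.pos_of_ne_zero fun h => hi ((hw _).1 h)
  have := Nat.mul_le_mul_right (Mw w) hji
  rw [chainWeight_eq_of_succ_eq_rho w hrho]
  omega

lemma apply_eq_zero_of_chainWeight_le (hw : ∀ a : F, w a = 0 ↔ a = 0) {S R : ℕ}
    (hS : S < Mw w) {u : Fin n → F} (hu : chainWeight w u ≤ S + R * Mw w) {j : Fin n}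
    (hj : R < j) : u j = 0 := by
  by_contra hne
  have hlt := mul_Mw_lt_chainWeight hw hne
  have hle : (R + 1) * Mw w ≤ j * Mw w := Nat.mul_le_mul_right _ hj
  rw [add_one_mul] at hle
  omega

lemma weight_apply_le_of_chainWeight_le (hw : ∀ a : F, w a = 0 ↔ a = 0) {S R : ℕ}
    (hS : S < Mw w) {u : Fin n → F} (hu : chainWeight w u ≤ S + R * Mw w) {j : Fin n}
    (hj : (j : ℕ) = R) : w (u j) ≤ S := by
  by_cases hne : u j = 0
  · simp [hne, (hw 0).2 rfl]
  have hrho : (j : ℕ) + 1 = rho u :=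
    le_antisymm (le_rho hne) (rho_le_of_forall_le_imp_eq_zero fun k hk =>
      apply_eq_zero_of_chainWeight_le hw hS hu (by omega))
  rw [chainWeight_eq_of_succ_eq_rho w hrho, hj] at hu
  omega

lemma dChain_le_diamW (w : F → ℕ) {A : Finset (Fin n → F)} {x y : Fin n → F}
    (hx : x ∈ A) (hy : y ∈ A) : dChain w x y ≤ diamW w A := by
  unfold diamW
  exact Finset.le_sup (f := fun p : (Fin n → F) × (Fin n → F) => dChain w p.1 p.2)
    (b := (x, y)) (Finset.mem_product.2 ⟨hx, hy⟩)

lemma card_filter_weight_le (hw : ∀ a : F, w a = 0 ↔ a = 0) (S : ℕ) :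
    (Finset.univ.filter fun a => w a ≤ S).card = 1 + (winv w S).card := by
  have h : Finset.univ.filter (fun a => w a ≤ S) = insert 0 (winv w S) := by
    ext a
    by_cases ha : a = 0 <;> simp [winv, ha, (hw 0).2 rfl]
  rw [h, Finset.card_insert_of_notMem (by simp [winv]), add_comm]

lemma one_add_card_winv_lt (hw : ∀ a : F, w a = 0 ↔ a = 0) {S : ℕ} (hS : S < Mw w) :
    1 + (winv w S).card < Fintype.card F := by
  obtain ⟨a, -, ha⟩ := Finset.exists_mem_eq_sup Finset.univ Finset.univ_nonempty w
  have hSa : S < w a := ha ▸ hS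
  rw [← card_filter_weight_le hw]
  exact Finset.card_lt_univ_of_notMem (x := a) (by simpa using hSa)

lemma winv_zero (hw : ∀ a : F, w a = 0 ↔ a = 0) : winv w 0 = ∅ := by
  ext a
  simp [winv, hw]

lemma card_le_of_diamW_le (hw : ∀ a : F, w a = 0 ↔ a = 0) {S R : ℕ} (hS : S < Mw w)
    {A : Finset (Fin n → F)} (hA : diamW w A ≤ S + R * Mw w) :
    A.card ≤ Fintype.card F ^ R * (1 + (winv w S).card) := by
  have hd : ∀ x ∈ A, ∀ y ∈ A, chainWeight w (x - y) ≤ S + R * Mw w :=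
    fun x hx y hy => (dChain_le_diamW w hx hy).trans hA
  rw [← card_filter_weight_le hw]
  refine card_le_pow_mul_card R (by simp [(hw 0).2 rfl])
    (fun x hx y hy j hj => sub_eq_zero.1 (apply_eq_zero_of_chainWeight_le hw hS (hd x hx y hy) hj))
    (fun x hx y hy j hj => ?_)
  simpa using weight_apply_le_of_chainWeight_le hw hS (hd x hx y hy) hj

lemma AstarW_le (hw : ∀ a : F, w a = 0 ↔ a = 0) (n : ℕ) {S : ℕ} (R : ℕ) (hS : S < Mw w) :
    AstarW w n (S + R * Mw w) ≤ Fintype.card F ^ R * (1 + (winv w S).card) :=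
  Finset.sup_le fun A _ => by
    split_ifs with hA
    exacts [card_le_of_diamW_le hw hS hA, Nat.zero_le _]

end ChainWeight

theorem stmt6_general {F : Type*} [Field F] [Fintype F] {n : ℕ}
    (w : F → ℕ) (hw : IsWeight w) (S R : ℕ) (hS : S < Mw w) :
    (0 < S → AstarW w n (S + R * Mw w) ≤ Fintype.card F ^ R * (1 + (winv w S).card)) ∧
    (S = 0 → AstarW w n (S + R * Mw w) ≤ Fintype.card F ^ R) ∧
    AstarW w n (S + R * Mw w) < Fintype.card F ^ (R + 1) := by
  have hbound := AstarW_le hw.1 n R hS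
  refine ⟨fun _ => hbound, fun hS0 => ?_, ?_⟩
  · subst hS0
    simpa [winv_zero hw.1] using hbound
  · calc AstarW w n (S + R * Mw w) ≤ Fintype.card F ^ R * (1 + (winv w S).card) := hbound
      _ < Fintype.card F ^ R * Fintype.card F :=
        Nat.mul_lt_mul_of_pos_left (one_add_card_winv_lt hw.1 hS) (pow_pos Fintype.card_pos R)
      _ = Fintype.card F ^ (R + 1) := (pow_succ _ _).symm

theorem stmt6 {F : Type*} [Field F] [Fintype F] {n : ℕ} (hn : 1 ≤ n)
    (w : F → ℕ) (hw : IsWeight w) (S R : ℕ) (hS : S < Mw w) :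
    (0 < S → AstarW w n (S + R * Mw w) ≤ Fintype.card F ^ R * (1 + (winv w S).card)) ∧
    (S = 0 → AstarW w n (S + R * Mw w) ≤ Fintype.card F ^ R) ∧
    AstarW w n (S + R * Mw w) < Fintype.card F ^ (R + 1) :=
  stmt6_general w hw S R hS
end

section
/- Let D = R·M_w with 0 ≤ R ≤ n an integer. Then: (1) diam_{d_w}(B_w(x, D)) = D for every x ∈ 𝔽_q^n; (2) B_w(x, D) is D-optimal for every x ∈ 𝔽_q^n; (3) B_w(0, D) = {x ∈ 𝔽_q^n : x_j = 0 for all j > R}, which is an R-dimensional 𝔽_q-linear subspace of 𝔽_q^n. Consequently, A*_{d_w}(D) = q^R. -/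
set_option linter.unusedSectionVars false

open scoped Classical

section helpers
variable {F : Type*} [Field F] [Fintype F]

lemma my_rho_le_iff {n : ℕ} (u : Fin n → F) (R : ℕ) :
    rho u ≤ R ↔ ∀ j : Fin n, R ≤ (j : ℕ) → u j = 0 := by
  unfold rho
  rw [Finset.sup_le_iff]
  constructor
  · intro h j hj
    by_contra hne
    have := h j (Finset.mem_filter.2 ⟨Finset.mem_univ _, hne⟩)
    omega
  · intro h j hj
    rw [Finset.mem_filter] at hj
    by_contra hlt
    exact hj.2 (h j (by omega))

lemma my_Mw_pos (w : F → ℕ) (hw : IsWeight w) : 1 ≤ Mw w := by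
  have h1 : w 1 ≠ 0 := fun h => one_ne_zero ((hw.1 1).1 h)
  have h2 : w 1 ≤ Mw w := Finset.le_sup (Finset.mem_univ (1 : F))
  omega

lemma my_w_le (w : F → ℕ) (a : F) : w a ≤ Mw w := Finset.le_sup (Finset.mem_univ a)

lemma my_top_ne {n : ℕ} (u : Fin n → F) (h : rho u ≠ 0) :
    u ⟨rho u - 1, lt_of_lt_of_le (Nat.sub_lt (Nat.pos_of_ne_zero h) Nat.one_pos)
      (rho_le u)⟩ ≠ 0 := by
  have hne : (Finset.univ.filter fun j => u j ≠ 0).Nonempty := by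
    by_contra hemp
    rw [Finset.not_nonempty_iff_eq_empty] at hemp
    exact h (by simp [rho, hemp])
  obtain ⟨j, hj, hjs⟩ := Finset.exists_mem_eq_sup _ hne (fun j : Fin n => (j : ℕ) + 1)
  have hr : rho u = (j : ℕ) + 1 := hjs
  have heq : (⟨rho u - 1, lt_of_lt_of_le (Nat.sub_lt (Nat.pos_of_ne_zero h) Nat.one_pos)
      (rho_le u)⟩ : Fin n) = j := Fin.ext (by simp [hr])
  rw [heq]
  exact (Finset.mem_filter.1 hj).2

lemma my_chain_le_iff {n : ℕ} (w : F → ℕ) (hw : IsWeight w) (u : Fin n → F) (R : ℕ) :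
    chainWeight w u ≤ R * Mw w ↔ rho u ≤ R := by
  unfold chainWeight
  split_ifs with h
  · simp [h]
  · have htne := my_top_ne u h
    have h1 : w (u ⟨rho u - 1, lt_of_lt_of_le (Nat.sub_lt (Nat.pos_of_ne_zero h)
        Nat.one_pos) (rho_le u)⟩) ≠ 0 := fun h0 => htne ((hw.1 _).1 h0)
    have h2 := my_w_le w (u ⟨rho u - 1, lt_of_lt_of_le (Nat.sub_lt (Nat.pos_of_ne_zero h)
        Nat.one_pos) (rho_le u)⟩)
    have hM := my_Mw_pos w hw
    constructor
    · intro hle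
      by_contra hgt
      push_neg at hgt
      have hg : R ≤ rho u - 1 := by omega
      have := Nat.mul_le_mul_right (Mw w) hg
      omega
    · intro hle
      have h3 : rho u - 1 + 1 = rho u := by omega
      calc w (u ⟨rho u - 1, _⟩) + (rho u - 1) * Mw w
          ≤ Mw w + (rho u - 1) * Mw w := by omega
        _ = rho u * Mw w := by rw [← h3, Nat.add_mul, one_mul, Nat.add_comm]; simp
        _ ≤ R * Mw w := Nat.mul_le_mul_right _ hle

lemma my_mem_ball {n : ℕ} (w : F → ℕ) (hw : IsWeight w) (x v : Fin n → F) (R : ℕ) :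
    v ∈ ballW w x (R * Mw w) ↔ ∀ j : Fin n, R ≤ (j : ℕ) → x j = v j := by
  simp only [ballW, Finset.mem_filter, Finset.mem_univ, true_and, dChain,
    my_chain_le_iff w hw, my_rho_le_iff, Pi.sub_apply, sub_eq_zero]

lemma my_rho_single {n : ℕ} (i : Fin n) (a : F) (ha : a ≠ 0) :
    rho (fun j => if j = i then a else 0) = (i : ℕ) + 1 := by
  unfold rho
  have hfil : (Finset.univ.filter fun j : Fin n => (if j = i then a else 0) ≠ 0) = {i} := by
    ext j
    simp only [Finset.mem_filter, Finset.mem_univ, true_and, Finset.mem_singleton]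
    split_ifs with hji
    · simp [hji, ha]
    · simp [hji]
  rw [hfil, Finset.sup_singleton]

lemma my_chainWeight_eq {n : ℕ} (w : F → ℕ) (u : Fin n → F) {m : ℕ}
    (hm : rho u = m + 1) (hmn : m < n) :
    chainWeight w u = w (u ⟨m, hmn⟩) + m * Mw w := by
  unfold chainWeight
  split_ifs with h
  · omega
  · have heq : (⟨rho u - 1, lt_of_lt_of_le (Nat.sub_lt (Nat.pos_of_ne_zero h)
        Nat.one_pos) (rho_le u)⟩ : Fin n) = ⟨m, hmn⟩ := Fin.ext (by simp [hm])
    rw [heq, hm]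
    simp

end helpers

set_option maxHeartbeats 2000000 in
theorem stmt8 {F : Type*} [Field F] [Fintype F] {n : ℕ} (hn : 1 ≤ n)
    (w : F → ℕ) (hw : IsWeight w) (R : ℕ) (hR : R ≤ n) :
    (∀ x : Fin n → F, diamW w (ballW w x (R * Mw w)) = R * Mw w) ∧
    (∀ x : Fin n → F, diamW w (ballW w x (R * Mw w)) ≤ R * Mw w ∧
        (ballW w x (R * Mw w)).card = AstarW w n (R * Mw w)) ∧
    (ballW w (0 : Fin n → F) (R * Mw w) =
      Finset.univ.filter fun x : Fin n → F => ∀ j : Fin n, R ≤ (j : ℕ) → x j = 0) ∧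
    (∃ V : Submodule F (Fin n → F),
      ((ballW w (0 : Fin n → F) (R * Mw w) : Finset (Fin n → F)) : Set (Fin n → F)) =
        (V : Set (Fin n → F)) ∧ Module.finrank F V = R) ∧
    AstarW w n (R * Mw w) = Fintype.card F ^ R := by
  -- ball description at 0
  have hball0 : ballW w (0 : Fin n → F) (R * Mw w) =
      Finset.univ.filter fun x : Fin n → F => ∀ j : Fin n, R ≤ (j : ℕ) → x j = 0 := by
    ext v
    rw [my_mem_ball w hw]
    simp only [Finset.mem_filter, Finset.mem_univ, true_and, Pi.zero_apply]
    exact ⟨fun h j hj => (h j hj).symm, fun h j hj => (h j hj).symm⟩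
  -- diam ≤ D
  have hdiam_le : ∀ x : Fin n → F, diamW w (ballW w x (R * Mw w)) ≤ R * Mw w := by
    intro x
    apply Finset.sup_le
    rintro ⟨u, v⟩ hp
    rw [Finset.mem_product] at hp
    have hu := (my_mem_ball w hw x u R).1 hp.1
    have hv := (my_mem_ball w hw x v R).1 hp.2
    show dChain w u v ≤ _
    rw [dChain, my_chain_le_iff w hw, my_rho_le_iff]
    intro j hj
    simp only [Pi.sub_apply]
    rw [← hu j hj, ← hv j hj, sub_self]
  -- the subspace
  let V : Submodule F (Fin n → F) :=
    { carrier := {x | ∀ j : Fin n, R ≤ (j : ℕ) → x j = 0}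
      add_mem' := fun ha hb j hj => by
        simp only [Pi.add_apply, ha j hj, hb j hj, add_zero]
      zero_mem' := fun j hj => rfl
      smul_mem' := fun c x hx j hj => by
        simp only [Pi.smul_apply, hx j hj, smul_zero] }
  -- equiv with Fin R → F
  let e : {x : Fin n → F // ∀ j : Fin n, R ≤ (j : ℕ) → x j = 0} ≃ (Fin R → F) :=
    { toFun := fun x i => x.1 (Fin.castLE hR i)
      invFun := fun f => ⟨fun j => if h : (j : ℕ) < R then f ⟨j, h⟩ else 0,
        fun j hj => dif_neg (by omega)⟩
      left_inv := fun x => Subtype.ext (funext fun j => by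
        dsimp only
        split_ifs with h
        · exact congrArg x.1 (Fin.ext rfl)
        · exact (x.2 j (by omega)).symm)
      right_inv := fun f => funext fun i => by
        dsimp only
        rw [dif_pos (show ((Fin.castLE hR i : Fin n) : ℕ) < R from i.isLt)]
        exact congrArg f (Fin.ext rfl) }
  have hcard0 : (ballW w (0 : Fin n → F) (R * Mw w)).card = Fintype.card F ^ R := by
    rw [hball0, ← Fintype.card_subtype, Fintype.card_congr e, Fintype.card_fun,
      Fintype.card_fin]
  -- AstarW upper bound
  have hAle : AstarW w n (R * Mw w) ≤ Fintype.card F ^ R := by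
    apply Finset.sup_le
    intro A _
    split_ifs with hA
    · unfold diamW at hA
      calc A.card ≤ (Finset.univ : Finset (Fin R → F)).card := by
            apply Finset.card_le_card_of_injOn (fun v i => v (Fin.castLE hR i))
            · intro _ _; exact Finset.mem_univ _
            · intro x hx y hy hxy
              have hd : dChain w x y ≤ R * Mw w :=
                le_trans (Finset.le_sup
                  (f := fun p : (Fin n → F) × (Fin n → F) => dChain w p.1 p.2)
                  (Finset.mk_mem_product (Finset.mem_coe.1 hx) (Finset.mem_coe.1 hy))) hA
              rw [dChain, my_chain_le_iff w hw, my_rho_le_iff] at hd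
              funext j
              by_cases h : (j : ℕ) < R
              · have hcj : Fin.castLE hR ⟨(j : ℕ), h⟩ = j := rfl
                have := congrFun hxy ⟨(j : ℕ), h⟩
                simpa [hcj] using this
              · have := hd j (by omega)
                simp only [Pi.sub_apply] at this
                exact sub_eq_zero.1 this
        _ = Fintype.card F ^ R := by
            rw [Finset.card_univ, Fintype.card_fun, Fintype.card_fin]
    · exact Nat.zero_le _
  -- AstarW lower bound
  have hAstar : AstarW w n (R * Mw w) = Fintype.card F ^ R := by
    refine le_antisymm hAle ?_
    have hle : (if diamW w (ballW w (0 : Fin n → F) (R * Mw w)) ≤ R * Mw w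
        then (ballW w (0 : Fin n → F) (R * Mw w)).card else 0) ≤ AstarW w n (R * Mw w) :=
      Finset.le_sup
        (f := fun A : Finset (Fin n → F) => if diamW w A ≤ R * Mw w then A.card else 0)
        (Finset.mem_univ _)
    rw [if_pos (hdiam_le 0), hcard0] at hle
    exact hle
  -- translation: card of ball at x
  have hcardx : ∀ x : Fin n → F,
      (ballW w x (R * Mw w)).card = (ballW w (0 : Fin n → F) (R * Mw w)).card := by
    intro x
    apply Finset.card_bij' (fun v _ => v - x) (fun u _ => u + x)
    · intro v hv
      rw [my_mem_ball w hw] at hv ⊢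
      intro j hj
      simp only [Pi.zero_apply, Pi.sub_apply, ← hv j hj, sub_self]
    · intro u hu
      rw [my_mem_ball w hw] at hu ⊢
      intro j hj
      have h0 : u j = 0 := (hu j hj).symm
      simp [h0]
    · intro v _; simp
    · intro u _; simp
  -- diam = D
  have hdiam_eq : ∀ x : Fin n → F, diamW w (ballW w x (R * Mw w)) = R * Mw w := by
    intro x
    refine le_antisymm (hdiam_le x) ?_
    rcases Nat.eq_zero_or_pos R with hR0 | hR1
    · simp [hR0]
    · obtain ⟨a, -, ha⟩ := Finset.exists_mem_eq_sup (Finset.univ : Finset F)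
        Finset.univ_nonempty w
      have haMw : w a = Mw w := ha.symm
      have hM := my_Mw_pos w hw
      have hane : a ≠ 0 := by
        intro h0
        have := (hw.1 a).2 h0
        omega
      have hR1n : R - 1 < n := by omega
      let i : Fin n := ⟨R - 1, hR1n⟩
      let v : Fin n → F := fun j => x j - (if j = i then a else 0)
      have hxv : x - v = fun j => if j = i then a else 0 := by
        funext j
        show x j - (x j - (if j = i then a else 0)) = _
        rw [sub_sub_cancel]
      have hrho : rho (x - v) = (R - 1) + 1 := by
        rw [hxv]; exact my_rho_single i a hane
      have hcw : chainWeight w (x - v) = w ((x - v) ⟨R - 1, hR1n⟩) + (R - 1) * Mw w :=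
        my_chainWeight_eq w (x - v) hrho hR1n
      have hval : (x - v) ⟨R - 1, hR1n⟩ = a := by
        rw [hxv]
        show (if i = i then a else 0) = a
        rw [if_pos rfl]
      have hDv : dChain w x v = R * Mw w := by
        show chainWeight w (x - v) = R * Mw w
        rw [hcw, hval, haMw]
        have h3 : R - 1 + 1 = R := by omega
        rw [← h3, Nat.add_mul, one_mul, Nat.add_comm]
        simp
      have hxmem : x ∈ ballW w x (R * Mw w) :=
        (my_mem_ball w hw x x R).2 fun j _ => rfl
      have hvmem : v ∈ ballW w x (R * Mw w) := by
        simp only [ballW, Finset.mem_filter, Finset.mem_univ, true_and, hDv, le_refl]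
      have hfin : dChain w x v ≤ diamW w (ballW w x (R * Mw w)) := by
        unfold diamW
        exact Finset.le_sup (f := fun p : (Fin n → F) × (Fin n → F) => dChain w p.1 p.2)
          (Finset.mk_mem_product hxmem hvmem)
      exact le_of_eq_of_le hDv.symm hfin
  refine ⟨hdiam_eq, fun x => ⟨hdiam_le x, by rw [hcardx x, hcard0, hAstar]⟩, hball0,
    ⟨V, ?_, ?_⟩, hAstar⟩
  · ext y
    rw [Finset.mem_coe, hball0, Finset.mem_filter]
    simp only [Finset.mem_univ, true_and, SetLike.mem_coe]
    exact Iff.rfl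
  · have eV : V ≃ₗ[F] (Fin R → F) :=
      { e with
        map_add' := fun x y => rfl
        map_smul' := fun c x => rfl }
    rw [eV.finrank_eq, Module.finrank_fin_fun]
end

section
/- Suppose the weight w is a positive integer multiple of the Hamming weight, i.e., there is an integer λ ≥ 1 with w(a) = λ for every nonzero a ∈ 𝔽_q. Then a code C ⊆ 𝔽_q^n with |C| ≥ 2 is diameter perfect if and only if C is MDS. -/
/-!
When every nonzero symbol has weight `λ`, the weighted chain weight is `λ · ϖ`, so all the
weighted notions are the chain-metric ones scaled by `λ`. A set of `ϖ`-diameter at most `e` injects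
into `𝔽_q^e` by truncation to the first `e` coordinates, and the vectors supported there attain
`q^e`; hence `A*(λ e) = q^e`. Since `⌊λ d⌋_w = λ (d - 1)`, diameter perfection of a code of minimum
distance `d` reads `q^(d - 1) |C| = q^n`, which is the MDS condition.
-/

set_option linter.unusedSectionVars false

open scoped Classical

section Rho

variable {F : Type*} [Field F] [Fintype F] {n : ℕ}

theorem le_rho_of_ne_zero {u : Fin n → F} {j : Fin n} (h : u j ≠ 0) : (j : ℕ) + 1 ≤ rho u :=
  Finset.le_sup (f := fun j : Fin n => (j : ℕ) + 1) (by simpa using h)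

theorem rho_le_iff {u : Fin n → F} {e : ℕ} :
    rho u ≤ e ↔ ∀ j : Fin n, e ≤ (j : ℕ) → u j = 0 := by
  refine ⟨fun h j hj => ?_, fun h => Finset.sup_le fun j hj => ?_⟩
  · by_contra hu
    have := le_rho_of_ne_zero hu
    omega
  · by_contra hje
    exact (Finset.mem_filter.mp hj).2 (h j (by omega))

theorem rho_eq_zero_iff {u : Fin n → F} : rho u = 0 ↔ u = 0 := by
  rw [← Nat.le_zero, rho_le_iff, funext_iff]
  simp

theorem apply_rho_sub_one_ne_zero {u : Fin n → F} (h : rho u ≠ 0) (hlt : rho u - 1 < n) :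
    u ⟨rho u - 1, hlt⟩ ≠ 0 := by
  intro hu
  have : rho u ≤ rho u - 1 := rho_le_iff.mpr fun j hj => by
    rcases hj.eq_or_lt with hj | hj
    · rw [← hu]
      exact congrArg u (Fin.ext hj.symm)
    · exact rho_le_iff.mp le_rfl j (by omega)
  omega

theorem exists_rho_eq {k : ℕ} (hk : k ≤ n) : ∃ u : Fin n → F, rho u = k := by
  cases k with
  | zero => exact ⟨0, rho_eq_zero_iff.mpr rfl⟩
  | succ m =>
    refine ⟨Pi.single ⟨m, hk⟩ 1, le_antisymm (rho_le_iff.mpr fun j hj => ?_) ?_⟩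
    · exact Pi.single_eq_of_ne (fun h => by rw [h] at hj; simp at hj) _
    · simpa using le_rho_of_ne_zero (u := Pi.single ⟨m, hk⟩ (1 : F)) (j := ⟨m, hk⟩) (by simp)

theorem exists_rho_sub_eq_dP {C : Finset (Fin n → F)} (hC : 1 < C.card) :
    ∃ x ∈ C, ∃ y ∈ C, x ≠ y ∧ rho (x - y) = dP C := by
  obtain ⟨x, hx, y, hy, hxy⟩ := Finset.one_lt_card.mp hC
  exact Nat.sInf_mem (s := {s | ∃ x ∈ C, ∃ y ∈ C, x ≠ y ∧ rho (x - y) = s})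
    ⟨_, x, hx, y, hy, hxy, rfl⟩

theorem exists_dChain_eq_dW {w : F → ℕ} {C : Finset (Fin n → F)} (hC : 1 < C.card) :
    ∃ x ∈ C, ∃ y ∈ C, x ≠ y ∧ dChain w x y = dW w C := by
  obtain ⟨x, hx, y, hy, hxy⟩ := Finset.one_lt_card.mp hC
  exact Nat.sInf_mem (s := {s | ∃ x ∈ C, ∃ y ∈ C, x ≠ y ∧ dChain w x y = s})
    ⟨_, x, hx, y, hy, hxy, rfl⟩

end Rho

section Truncation

variable {F : Type*} [Field F] [Fintype F] {n e : ℕ}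

theorem card_le_pow_of_rho_sub_le (he : e ≤ n) {A : Finset (Fin n → F)}
    (hA : ∀ x ∈ A, ∀ y ∈ A, rho (x - y) ≤ e) : A.card ≤ Fintype.card F ^ e := by
  calc A.card ≤ (Finset.univ : Finset (Fin e → F)).card :=
        Finset.card_le_card_of_injOn (fun x i => x (Fin.castLE he i))
          (fun _ _ => Finset.mem_coe.mpr (Finset.mem_univ _)) fun x hx y hy hxy => by
            funext j
            by_cases hj : (j : ℕ) < e
            · exact congrFun hxy ⟨j, hj⟩
            · exact sub_eq_zero.mp (rho_le_iff.mp (hA x hx y hy) j (by omega))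
    _ = Fintype.card F ^ e := by simp

theorem exists_card_eq_pow_rho_sub_le (he : e ≤ n) :
    ∃ A : Finset (Fin n → F), A.card = Fintype.card F ^ e ∧
      ∀ x ∈ A, ∀ y ∈ A, rho (x - y) ≤ e := by
  let extend : (Fin e → F) → Fin n → F := fun v => Function.extend (Fin.castLE he) v 0
  have extend_eq_zero (v : Fin e → F) (j : Fin n) (hj : e ≤ (j : ℕ)) : extend v j = 0 :=
    Function.extend_apply' _ _ _ fun ⟨i, hi⟩ => by rw [← hi] at hj; simp at hj; omega
  refine ⟨Finset.univ.image extend, ?_, ?_⟩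
  · rw [Finset.card_image_of_injective _ (Function.extend_injective (Fin.castLE_injective he) 0)]
    simp
  · simp only [Finset.mem_image, Finset.mem_univ, true_and]
    rintro _ ⟨v, rfl⟩ _ ⟨v', rfl⟩
    exact rho_le_iff.mpr fun j hj => by
      rw [Pi.sub_apply, extend_eq_zero v j hj, extend_eq_zero v' j hj, sub_zero]

end Truncation

section ProportionalWeight

variable {F : Type*} [Field F] [Fintype F] {w : F → ℕ} {lam : ℕ}

theorem Mw_eq_of_forall_ne_zero (h0 : w 0 = 0) (hwl : ∀ a : F, a ≠ 0 → w a = lam) :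
    Mw w = lam :=
  le_antisymm (Finset.sup_le fun a _ => by by_cases ha : a = 0 <;> simp [ha, h0, hwl])
    (hwl 1 one_ne_zero ▸ Finset.le_sup (Finset.mem_univ 1))

theorem chainWeight_eq_mul_rho (h0 : w 0 = 0) (hwl : ∀ a : F, a ≠ 0 → w a = lam) {n : ℕ}
    (u : Fin n → F) : chainWeight w u = lam * rho u := by
  unfold chainWeight
  split_ifs with h
  · simp [h]
  · rw [hwl _ (apply_rho_sub_one_ne_zero h _), Mw_eq_of_forall_ne_zero h0 hwl]
    obtain ⟨m, hm⟩ := Nat.exists_eq_add_one_of_ne_zero h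
    rw [hm, Nat.add_sub_cancel]
    ring

variable {n : ℕ}

theorem dW_eq_mul_dP (hcw : ∀ u : Fin n → F, chainWeight w u = lam * rho u)
    {C : Finset (Fin n → F)} (hC : 1 < C.card) : dW w C = lam * dP C := by
  obtain ⟨x, hx, y, hy, hxy, hd⟩ := exists_rho_sub_eq_dP hC
  obtain ⟨x', hx', y', hy', hxy', hd'⟩ := exists_dChain_eq_dW (w := w) hC
  refine le_antisymm (Nat.sInf_le ⟨x, hx, y, hy, hxy, by rw [dChain, hcw, hd]⟩) ?_
  rw [← hd', dChain, hcw]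
  exact Nat.mul_le_mul_left lam (Nat.sInf_le ⟨x', hx', y', hy', hxy', rfl⟩)

theorem floorW_mul (hcw : ∀ u : Fin n → F, chainWeight w u = lam * rho u) (hlam : 0 < lam)
    {d : ℕ} (hd : 0 < d) (hdn : d ≤ n + 1) : floorW w n (lam * d) = lam * (d - 1) := by
  refine le_antisymm (Finset.sup_le fun u hu => ?_) ?_
  · rw [Finset.mem_filter, hcw, Nat.mul_lt_mul_left hlam] at hu
    rw [hcw]
    exact Nat.mul_le_mul_left lam (by omega)
  · obtain ⟨u, hu⟩ := exists_rho_eq (F := F) (show d - 1 ≤ n by omega)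
    have hmem : u ∈ Finset.univ.filter fun v : Fin n → F => chainWeight w v < lam * d := by
      rw [Finset.mem_filter, hcw, hu, Nat.mul_lt_mul_left hlam]
      exact ⟨Finset.mem_univ _, by omega⟩
    calc lam * (d - 1) = chainWeight w u := by rw [hcw, hu]
      _ ≤ _ := Finset.le_sup hmem

theorem card_le_AstarW {D : ℕ} {A : Finset (Fin n → F)} (hA : diamW w A ≤ D) :
    A.card ≤ AstarW w n D := by
  have := Finset.le_sup
    (f := fun A : Finset (Fin n → F) => if diamW w A ≤ D then A.card else 0) (Finset.mem_univ A)
  rwa [if_pos hA] at this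

theorem AstarW_le_s10 {D m : ℕ} (h : ∀ A : Finset (Fin n → F), diamW w A ≤ D → A.card ≤ m) :
    AstarW w n D ≤ m :=
  Finset.sup_le fun A _ => by
    split_ifs with hA
    exacts [h A hA, Nat.zero_le m]

theorem diamW_le_iff {D : ℕ} {A : Finset (Fin n → F)} :
    diamW w A ≤ D ↔ ∀ x ∈ A, ∀ y ∈ A, dChain w x y ≤ D := by
  simp only [diamW, Finset.sup_le_iff, Finset.mem_product, Prod.forall, and_imp]
  exact ⟨fun h x hx y hy => h x y hx hy, fun h x y hx hy => h x hx y hy⟩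

theorem AstarW_mul (hcw : ∀ u : Fin n → F, chainWeight w u = lam * rho u) (hlam : 0 < lam)
    {e : ℕ} (he : e ≤ n) : AstarW w n (lam * e) = Fintype.card F ^ e := by
  have diamW_le_iff_rho {A : Finset (Fin n → F)} :
      diamW w A ≤ lam * e ↔ ∀ x ∈ A, ∀ y ∈ A, rho (x - y) ≤ e := by
    simp only [diamW_le_iff, dChain, hcw, Nat.mul_le_mul_left_iff hlam]
  refine le_antisymm (AstarW_le_s10 fun A hA => card_le_pow_of_rho_sub_le he
    (diamW_le_iff_rho.mp hA)) ?_
  obtain ⟨A, hcard, hA⟩ := exists_card_eq_pow_rho_sub_le (F := F) he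
  exact hcard ▸ card_le_AstarW (diamW_le_iff_rho.mpr hA)

end ProportionalWeight

theorem stmt10_general {F : Type*} [Field F] [Fintype F] {n : ℕ}
    (w : F → ℕ) (hw : IsWeight w) (lam : ℕ)
    (hwl : ∀ a : F, a ≠ 0 → w a = lam)
    (C : Finset (Fin n → F)) (hC : 2 ≤ C.card) :
    AstarW w n (floorW w n (dW w C)) * C.card = Fintype.card F ^ n ↔
      C.card = Fintype.card F ^ (n - dP C + 1) := by
  have hcw : ∀ u : Fin n → F, chainWeight w u = lam * rho u :=
    chainWeight_eq_mul_rho ((hw.1 0).mpr rfl) hwl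
  have hlam : 0 < lam :=
    hwl 1 one_ne_zero ▸ Nat.pos_of_ne_zero fun h => one_ne_zero ((hw.1 1).mp h)
  obtain ⟨x, hx, y, hy, hxy, hd⟩ := exists_rho_sub_eq_dP hC
  have hd0 : 0 < dP C :=
    hd ▸ Nat.pos_of_ne_zero (rho_eq_zero_iff.not.mpr (sub_ne_zero.mpr hxy))
  have hdn : dP C ≤ n := hd ▸ rho_le (x - y)
  have hsplit : Fintype.card F ^ n =
      Fintype.card F ^ (dP C - 1) * Fintype.card F ^ (n - dP C + 1) := by
    rw [← pow_add]
    congr 1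
    omega
  rw [dW_eq_mul_dP hcw hC, floorW_mul hcw hlam hd0 (by omega), AstarW_mul hcw hlam (by omega),
    hsplit, Nat.mul_left_cancel_iff (pow_pos Fintype.card_pos _)]

theorem stmt10 {F : Type*} [Field F] [Fintype F] {n : ℕ} (hn : 1 ≤ n)
    (w : F → ℕ) (hw : IsWeight w) (lam : ℕ) (hlam : 1 ≤ lam)
    (hwl : ∀ a : F, a ≠ 0 → w a = lam)
    (C : Finset (Fin n → F)) (hC : 2 ≤ C.card) :
    AstarW w n (floorW w n (dW w C)) * C.card = Fintype.card F ^ n ↔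
      C.card = Fintype.card F ^ (n - dP C + 1) :=
  stmt10_general w hw lam hwl C hC
end
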